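/- Let X be a chain and let α, β be orientation-preserving partial transformations of X. Then, in the monoid POP(X): (1) α and β are L-related (i.e. there exist γ, λ ∈ POP(X) with α = γβ and β = λα, composition written left-to-right with the left factor applied first) if and only if Im(α) = Im(β); (2) α and β are R-related (i.e. there exist γ, λ ∈ POP(X) with α = βγ and β = αλ) if and only if Ker(α) = Ker(β); (3) α and β are H-related (both L-related and R-related) if and only if Im(α) = Im(β) and Ker(α) = Ker(β). -/

import Mathlib

/-!
A factorisation `α = γβ` (`γ` applied first) forces `Im α ⊆ Im β`, and `α = βγ` forces
`Dom α ⊆ Dom β` and `Ker β ⊆ Ker α`. Conversely, let `s` choose one preimage under `β` of each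
point of `Im β`. If `Im α ⊆ Im β` then `α = (α s) β`, and if `Dom α ⊆ Dom β` and
`Ker β ⊆ Ker α` then `α = β (s α)`. So everything reduces to two facts: `POP(X)` is closed under
composition, and such an `s` is orientation-preserving.

Both are proved with ideals that may be empty ("cuts"). If `Y` is a cut of `β`, the points of
`Im β` whose chosen preimage lies outside `Y` form a cut of `s`. For cuts `Y` of `f` and `Z` of
`g`, sort the points `x` of `Dom (f g)` by whether `x ∈ Y` and whether `f x ∈ Z`. Points of type
(in, in) and (out, out) cannot coexist, since the first cut puts the image of an (out, out) point
below that of an (in, in) point and the second cut puts it strictly above. If there is no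
(out, out) point, the (in, in) points form a cut of `f g`; otherwise the mixed points do.
-/

variable {X : Type*}

/-- The partial transformation `f` is order-preserving on the subset `A` of its domain. -/
def IsOrdOn [LinearOrder X] (f : X →. X) (A : Set X) : Prop :=
  ∀ ⦃x y u v : X⦄, x ∈ A → y ∈ A → x ≤ y → u ∈ f x → v ∈ f y → u ≤ v

/-- `Y` is an ideal of the partial transformation `f`: a nonempty subset of the domain such
that `f` is order-preserving on `Y` and on `Dom f \ Y`, and every element of `Y` is below every
element of `Dom f \ Y` while its image is above. -/
def IsIdeal [LinearOrder X] (f : X →. X) (Y : Set X) : Prop :=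
  Y.Nonempty ∧ Y ⊆ f.Dom ∧ IsOrdOn f Y ∧ IsOrdOn f (f.Dom \ Y) ∧
    ∀ ⦃a b u v : X⦄, a ∈ Y → b ∈ f.Dom \ Y → u ∈ f a → v ∈ f b → a ≤ b ∧ v ≤ u

/-- `f` is an orientation-preserving partial transformation: it is the empty transformation
or it admits an ideal. -/
def IsOP [LinearOrder X] (f : X →. X) : Prop :=
  f.Dom = ∅ ∨ ∃ Y : Set X, IsIdeal f Y

namespace PFun

variable {α β γ : Type*} {f : α →. β} {g : β →. γ}

theorem mem_comp_iff {x : α} {z : γ} : z ∈ g.comp f x ↔ ∃ y ∈ f x, z ∈ g y :=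
  Part.mem_bind_iff

theorem ran_comp_subset : (g.comp f).ran ⊆ g.ran := fun _ ⟨_, hz⟩ =>
  let ⟨y, _, hzy⟩ := mem_comp_iff.1 hz
  ⟨y, hzy⟩

theorem dom_comp_subset : (g.comp f).Dom ⊆ f.Dom := by
  rw [dom_comp]
  exact preimage_subset_dom _ _

theorem exists_of_mem_comp_of_mem_preimage {B : Set β} {x : α} {z : γ}
    (hx : x ∈ f.preimage B) (hz : z ∈ g.comp f x) : ∃ y ∈ B, y ∈ f x ∧ z ∈ g y := by
  obtain ⟨y, hyB, hy⟩ := hx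
  obtain ⟨y', hy', hzy'⟩ := mem_comp_iff.1 hz
  obtain rfl := Part.mem_unique hy hy'
  exact ⟨y, hyB, hy, hzy'⟩

theorem mem_dom_comp_cases {A : Set α} {B : Set β} {x : α} (hx : x ∈ (g.comp f).Dom) :
    x ∈ A ∩ f.preimage B ∨ x ∈ A ∩ f.preimage (g.Dom \ B) ∨
      x ∈ (f.Dom \ A) ∩ f.preimage B ∨ x ∈ (f.Dom \ A) ∩ f.preimage (g.Dom \ B) := by
  rw [dom_comp] at hx
  obtain ⟨y, hyg, hy⟩ := hx
  have hxf : x ∈ f.Dom := (f.mem_dom x).2 ⟨y, hy⟩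
  by_cases hxA : x ∈ A <;> by_cases hyB : y ∈ B
  · exact Or.inl ⟨hxA, y, hyB, hy⟩
  · exact Or.inr (Or.inl ⟨hxA, y, ⟨hyg, hyB⟩, hy⟩)
  · exact Or.inr (Or.inr (Or.inl ⟨⟨hxf, hxA⟩, y, hyB, hy⟩))
  · exact Or.inr (Or.inr (Or.inr ⟨⟨hxf, hxA⟩, y, ⟨hyg, hyB⟩, hy⟩))

end PFun

section OrientationPreserving

variable [LinearOrder X] {f g s : X →. X} {A B Y : Set X}

theorem IsOrdOn.mono (hf : IsOrdOn f A) (hBA : B ⊆ A) : IsOrdOn f B :=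
  fun _ _ _ _ hx hy => hf (hBA hx) (hBA hy)

theorem IsOrdOn.le_of_image_lt {a b u v : X} (hf : IsOrdOn f A) (ha : a ∈ A) (hb : b ∈ A)
    (hu : u ∈ f a) (hv : v ∈ f b) (huv : u < v) : a ≤ b :=
  le_of_not_gt fun hba => (hf hb ha hba.le hv hu).not_gt huv

theorem IsOrdOn.comp (hf : IsOrdOn f A) (hg : IsOrdOn g B) :
    IsOrdOn (g.comp f) (A ∩ f.preimage B) := by
  rintro x y u v ⟨hxA, hxB⟩ ⟨hyA, hyB⟩ hxy hu hv
  obtain ⟨x', hx'B, hx', hux⟩ := PFun.exists_of_mem_comp_of_mem_preimage hxB hu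
  obtain ⟨y', hy'B, hy', hvy⟩ := PFun.exists_of_mem_comp_of_mem_preimage hyB hv
  exact hg hx'B hy'B (hf hxA hyA hxy hx' hy') hux hvy

theorem IsOrdOn.union (hA : IsOrdOn f A) (hB : IsOrdOn f B) (hlt : ∀ a ∈ A, ∀ b ∈ B, a < b)
    (hle : ∀ ⦃a b u v : X⦄, a ∈ A → b ∈ B → u ∈ f a → v ∈ f b → u ≤ v) :
    IsOrdOn f (A ∪ B) := by
  rintro x y u v (hx | hx) (hy | hy) hxy hu hv
  · exact hA hx hy hxy hu hv
  · exact hle hx hy hu hv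
  · exact absurd hxy (hlt y hy x hx).not_ge
  · exact hB hx hy hxy hu hv

/-- An `IsIdeal` that may be empty. -/
structure IsCut (f : X →. X) (Y : Set X) : Prop where
  subset_dom : Y ⊆ f.Dom
  isOrdOn : IsOrdOn f Y
  isOrdOn_diff : IsOrdOn f (f.Dom \ Y)
  le : ∀ ⦃a b : X⦄, a ∈ Y → b ∈ f.Dom \ Y → a ≤ b
  image_le : ∀ ⦃a b u v : X⦄, a ∈ Y → b ∈ f.Dom \ Y → u ∈ f a → v ∈ f b → v ≤ u

theorem IsCut.lt {a b : X} (hY : IsCut f Y) (ha : a ∈ Y) (hb : b ∈ f.Dom \ Y) : a < b :=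
  (hY.le ha hb).lt_of_ne fun hab => hb.2 (hab ▸ ha)

theorem isCut_dom (hf : IsOrdOn f f.Dom) : IsCut f f.Dom where
  subset_dom := subset_rfl
  isOrdOn := hf
  isOrdOn_diff := hf.mono Set.sdiff_subset
  le _ _ _ hb := absurd hb.1 hb.2
  image_le _ _ _ _ _ hb := absurd hb.1 hb.2

theorem IsIdeal.isCut (hY : IsIdeal f Y) : IsCut f Y :=
  let ⟨_, hYdom, hYord, hYdiff, hYcross⟩ := hY
  { subset_dom := hYdom
    isOrdOn := hYord
    isOrdOn_diff := hYdiff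
    le := fun _ _ ha hb => (hYcross ha hb (Part.get_mem (hYdom ha)) (Part.get_mem hb.1)).1
    image_le := fun _ _ _ _ ha hb hu hv => (hYcross ha hb hu hv).2 }

theorem IsCut.isIdeal (hY : IsCut f Y) (hne : Y.Nonempty) : IsIdeal f Y :=
  ⟨hne, hY.subset_dom, hY.isOrdOn, hY.isOrdOn_diff,
    fun _ _ _ _ ha hb hu hv => ⟨hY.le ha hb, hY.image_le ha hb hu hv⟩⟩

theorem isOP_iff_exists_isCut : IsOP f ↔ ∃ Y, IsCut f Y := by
  constructor
  · rintro (hdom | ⟨Y, hY⟩)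
    · refine ⟨f.Dom, isCut_dom fun x _ _ _ hx => ?_⟩
      simp [hdom] at hx
    · exact ⟨Y, hY.isCut⟩
  · rintro ⟨Y, hY⟩
    obtain hYempty | hne := Y.eq_empty_or_nonempty
    · obtain hdom | hdom := f.Dom.eq_empty_or_nonempty
      · exact Or.inl hdom
      have hf : IsOrdOn f f.Dom := by simpa [hYempty] using hY.isOrdOn_diff
      exact Or.inr ⟨f.Dom, (isCut_dom hf).isIdeal hdom⟩
    · exact Or.inr ⟨Y, hY.isIdeal hne⟩

section Composition

variable {Yf Yg : Set X}

theorem IsCut.isOrdOn_comp_mixed (hf : IsCut f Yf) (hg : IsCut g Yg) :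
    IsOrdOn (g.comp f) (Yf ∩ f.preimage (g.Dom \ Yg) ∪ (f.Dom \ Yf) ∩ f.preimage Yg) := by
  refine (hf.isOrdOn.comp hg.isOrdOn_diff).union (hf.isOrdOn_diff.comp hg.isOrdOn)
    (fun a ha b hb => hf.lt ha.1 hb.1) ?_
  rintro a b u v ⟨-, ha⟩ ⟨-, hb⟩ hu hv
  obtain ⟨a', ha'Y, -, hua⟩ := PFun.exists_of_mem_comp_of_mem_preimage ha hu
  obtain ⟨b', hb'Y, -, hvb⟩ := PFun.exists_of_mem_comp_of_mem_preimage hb hv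
  exact hg.image_le hb'Y ha'Y hvb hua

theorem IsCut.eq_empty_or_eq_empty_of_comp (hf : IsCut f Yf) (hg : IsCut g Yg) :
    Yf ∩ f.preimage Yg = ∅ ∨ (f.Dom \ Yf) ∩ f.preimage (g.Dom \ Yg) = ∅ := by
  by_contra! ⟨⟨a, haY, a', ha'Y, ha'⟩, ⟨b, hbY, b', hb'Y, hb'⟩⟩
  exact (hf.image_le haY hbY ha' hb').not_gt (hg.lt ha'Y hb'Y)

theorem IsCut.comp_inter_preimage (hf : IsCut f Yf) (hg : IsCut g Yg)
    (h4 : (f.Dom \ Yf) ∩ f.preimage (g.Dom \ Yg) = ∅) :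
    IsCut (g.comp f) (Yf ∩ f.preimage Yg) := by
  have hdiff : (g.comp f).Dom \ (Yf ∩ f.preimage Yg) ⊆
      Yf ∩ f.preimage (g.Dom \ Yg) ∪ (f.Dom \ Yf) ∩ f.preimage Yg := fun x ⟨hxD, hx1⟩ => by
    rcases PFun.mem_dom_comp_cases hxD with hx1' | hx2 | hx3 | hx4
    exacts [absurd hx1' hx1, Or.inl hx2, Or.inr hx3, (h4.subset hx4).elim]
  refine ⟨?_, hf.isOrdOn.comp hg.isOrdOn, (hf.isOrdOn_comp_mixed hg).mono hdiff,
    fun a b ha hb => ?_, fun a b u v ha hb hu hv => ?_⟩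
  · rw [PFun.dom_comp]
    exact fun x ⟨_, hx⟩ => f.preimage_mono hg.subset_dom hx
  · rcases hdiff hb with hb2 | hb3
    · obtain ⟨a', ha'Y, ha'⟩ := ha.2
      obtain ⟨b', hb'Y, hb'⟩ := hb2.2
      exact hf.isOrdOn.le_of_image_lt ha.1 hb2.1 ha' hb' (hg.lt ha'Y hb'Y)
    · exact hf.le ha.1 hb3.1
  · obtain ⟨a', ha'Y, ha', hua⟩ := PFun.exists_of_mem_comp_of_mem_preimage ha.2 hu
    rcases hdiff hb with hb2 | hb3
    · obtain ⟨b', hb'Y, -, hvb⟩ := PFun.exists_of_mem_comp_of_mem_preimage hb2.2 hv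
      exact hg.image_le ha'Y hb'Y hua hvb
    · obtain ⟨b', hb'Y, hb', hvb⟩ := PFun.exists_of_mem_comp_of_mem_preimage hb3.2 hv
      exact hg.isOrdOn hb'Y ha'Y (hf.image_le ha.1 hb3.1 ha' hb') hvb hua

theorem IsCut.comp_mixed (hf : IsCut f Yf) (hg : IsCut g Yg)
    (h1 : Yf ∩ f.preimage Yg = ∅) :
    IsCut (g.comp f) (Yf ∩ f.preimage (g.Dom \ Yg) ∪ (f.Dom \ Yf) ∩ f.preimage Yg) := by
  have hdiff : (g.comp f).Dom \ (Yf ∩ f.preimage (g.Dom \ Yg) ∪ (f.Dom \ Yf) ∩ f.preimage Yg) ⊆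
      (f.Dom \ Yf) ∩ f.preimage (g.Dom \ Yg) := fun x ⟨hxD, hxM⟩ => by
    rcases PFun.mem_dom_comp_cases hxD with hx1 | hx2 | hx3 | hx4
    exacts [(h1.subset hx1).elim, absurd (Or.inl hx2) hxM, absurd (Or.inr hx3) hxM, hx4]
  refine ⟨?_, hf.isOrdOn_comp_mixed hg, (hf.isOrdOn_diff.comp hg.isOrdOn_diff).mono hdiff,
    fun a b ha hb => ?_, fun a b u v ha hb hu hv => ?_⟩
  · rw [PFun.dom_comp]
    rintro x (⟨_, hx⟩ | ⟨_, hx⟩)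
    exacts [f.preimage_mono Set.sdiff_subset hx, f.preimage_mono hg.subset_dom hx]
  · have hb4 := hdiff hb
    rcases ha with ha2 | ha3
    · exact hf.le ha2.1 hb4.1
    · obtain ⟨a', ha'Y, ha'⟩ := ha3.2
      obtain ⟨b', hb'Y, hb'⟩ := hb4.2
      exact hf.isOrdOn_diff.le_of_image_lt ha3.1 hb4.1 ha' hb' (hg.lt ha'Y hb'Y)
  · have hb4 := hdiff hb
    obtain ⟨b', hb'Y, hb', hvb⟩ := PFun.exists_of_mem_comp_of_mem_preimage hb4.2 hv
    rcases ha with ha2 | ha3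
    · obtain ⟨a', ha'Y, ha', hua⟩ := PFun.exists_of_mem_comp_of_mem_preimage ha2.2 hu
      exact hg.isOrdOn_diff hb'Y ha'Y (hf.image_le ha2.1 hb4.1 ha' hb') hvb hua
    · obtain ⟨a', ha'Y, -, hua⟩ := PFun.exists_of_mem_comp_of_mem_preimage ha3.2 hu
      exact hg.image_le ha'Y hb'Y hua hvb

theorem IsOP.comp (hf : IsOP f) (hg : IsOP g) : IsOP (g.comp f) := by
  obtain ⟨Yf, hYf⟩ := isOP_iff_exists_isCut.1 hf
  obtain ⟨Yg, hYg⟩ := isOP_iff_exists_isCut.1 hg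
  rw [isOP_iff_exists_isCut]
  rcases hYf.eq_empty_or_eq_empty_of_comp hYg with h1 | h4
  exacts [⟨_, hYf.comp_mixed hYg h1⟩, ⟨_, hYf.comp_inter_preimage hYg h4⟩]

end Composition

theorem IsOrdOn.of_inverse (hs : ∀ ⦃v z⦄, z ∈ s v → v ∈ f z) (hf : IsOrdOn f A) :
    IsOrdOn s (s.preimage A) := by
  rintro v w z z' ⟨z₀, hz₀A, hz₀⟩ ⟨z₀', hz₀'A, hz₀'⟩ hvw hz hz'
  obtain rfl := Part.mem_unique hz₀ hz
  obtain rfl := Part.mem_unique hz₀' hz'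
  refine le_of_not_gt fun hlt => hlt.ne ?_
  obtain rfl := le_antisymm hvw (hf hz₀'A hz₀A hlt.le (hs hz') (hs hz))
  exact Part.mem_unique hz' hz

theorem IsCut.of_inverse (hs : ∀ ⦃v z⦄, z ∈ s v → v ∈ f z) (hY : IsCut f Y) :
    IsCut s (s.preimage (f.Dom \ Y)) := by
  have hdiff : s.Dom \ s.preimage (f.Dom \ Y) ⊆ s.preimage Y := by
    rintro v ⟨hv, hvY⟩
    obtain ⟨z, hz⟩ := (s.mem_dom v).1 hv
    by_cases hzY : z ∈ Y
    · exact ⟨z, hzY, hz⟩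
    · exact absurd ⟨z, ⟨(f.mem_dom z).2 ⟨v, hs hz⟩, hzY⟩, hz⟩ hvY
  refine ⟨s.preimage_subset_dom _, hY.isOrdOn_diff.of_inverse hs,
    (hY.isOrdOn.of_inverse hs).mono hdiff, fun v w hv hw => ?_, fun v w z z' hv hw hz hz' => ?_⟩
  · obtain ⟨z, hzY, hz⟩ := hv
    obtain ⟨z', hz'Y, hz'⟩ := hdiff hw
    exact hY.image_le hz'Y hzY (hs hz') (hs hz)
  · obtain ⟨z₀, hz₀Y, hz₀⟩ := hv
    obtain ⟨z₀', hz₀'Y, hz₀'⟩ := hdiff hw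
    obtain rfl := Part.mem_unique hz₀ hz
    obtain rfl := Part.mem_unique hz₀' hz'
    exact hY.le hz₀'Y hz₀Y

theorem IsOP.exists_inverse (hf : IsOP f) :
    ∃ s : X →. X, IsOP s ∧ s.Dom = f.ran ∧ ∀ ⦃v z⦄, z ∈ s v → v ∈ f z := by
  obtain ⟨Y, hY⟩ := isOP_iff_exists_isCut.1 hf
  let s : X →. X := fun v => ⟨v ∈ f.ran, fun h => h.choose⟩
  have hs : ∀ ⦃v z⦄, z ∈ s v → v ∈ f z := by
    rintro v z ⟨h, rfl⟩
    exact h.choose_spec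
  exact ⟨s, isOP_iff_exists_isCut.2 ⟨_, hY.of_inverse hs⟩, rfl, hs⟩

theorem exists_isOP_comp_eq_of_ran_subset (hf : IsOP f) (hg : IsOP g) (hran : f.ran ⊆ g.ran) :
    ∃ γ : X →. X, IsOP γ ∧ g.comp γ = f := by
  obtain ⟨s, hsOP, hsDom, hs⟩ := hg.exists_inverse
  refine ⟨s.comp f, hf.comp hsOP, PFun.ext fun x y => ⟨fun hy => ?_, fun hy => ?_⟩⟩
  · obtain ⟨z, hz, hyz⟩ := PFun.mem_comp_iff.1 hy
    obtain ⟨w, hw, hzw⟩ := PFun.mem_comp_iff.1 hz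
    rwa [Part.mem_unique hyz (hs hzw)]
  · have hys : y ∈ s.Dom := hsDom ▸ hran ⟨x, hy⟩
    obtain ⟨z, hz⟩ := (s.mem_dom y).1 hys
    exact PFun.mem_comp_iff.2 ⟨z, PFun.mem_comp_iff.2 ⟨y, hy, hz⟩, hs hz⟩

theorem exists_isOP_comp_eq_of_ker (hf : IsOP f) (hg : IsOP g) (hdom : g.Dom ⊆ f.Dom)
    (hker : ∀ x ∈ f.Dom, ∀ y ∈ f.Dom, f x = f y → g x = g y) :
    ∃ l : X →. X, IsOP l ∧ l.comp f = g := by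
  obtain ⟨s, hsOP, hsDom, hs⟩ := hf.exists_inverse
  have hgs : ∀ ⦃x z w⦄, z ∈ f x → w ∈ s z → g w = g x := fun x z w hz hw =>
    hker w ((f.mem_dom w).2 ⟨z, hs hw⟩) x ((f.mem_dom x).2 ⟨z, hz⟩)
      ((Part.eq_some_iff.2 (hs hw)).trans (Part.eq_some_iff.2 hz).symm)
  refine ⟨g.comp s, hsOP.comp hg, PFun.ext fun x y => ⟨fun hy => ?_, fun hy => ?_⟩⟩
  · obtain ⟨z, hz, hyz⟩ := PFun.mem_comp_iff.1 hy
    obtain ⟨w, hw, hyw⟩ := PFun.mem_comp_iff.1 hyz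
    rwa [← hgs hz hw]
  · obtain ⟨z, hz⟩ := (f.mem_dom x).1 (hdom ((g.mem_dom x).2 ⟨y, hy⟩))
    obtain ⟨w, hw⟩ := (s.mem_dom z).1 (hsDom ▸ ⟨x, hz⟩)
    exact PFun.mem_comp_iff.2 ⟨z, hz, PFun.mem_comp_iff.2 ⟨w, hw, hgs hz hw ▸ hy⟩⟩

theorem greenL_iff_ran_eq (hf : IsOP f) (hg : IsOP g) :
    ((∃ γ : X →. X, IsOP γ ∧ g.comp γ = f) ∧ (∃ l : X →. X, IsOP l ∧ f.comp l = g)) ↔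
      f.ran = g.ran := by
  constructor
  · rintro ⟨⟨γ, -, hγ⟩, ⟨l, -, hl⟩⟩
    exact (hγ ▸ PFun.ran_comp_subset).antisymm (hl ▸ PFun.ran_comp_subset)
  · intro hran
    exact ⟨exists_isOP_comp_eq_of_ran_subset hf hg hran.subset,
      exists_isOP_comp_eq_of_ran_subset hg hf hran.symm.subset⟩

theorem greenR_iff_dom_eq_and_ker (hf : IsOP f) (hg : IsOP g) :
    ((∃ γ : X →. X, IsOP γ ∧ γ.comp g = f) ∧ (∃ l : X →. X, IsOP l ∧ l.comp f = g)) ↔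
      (f.Dom = g.Dom ∧ ∀ x ∈ f.Dom, ∀ y ∈ f.Dom, (f x = f y ↔ g x = g y)) := by
  constructor
  · rintro ⟨⟨γ, -, hγ⟩, ⟨l, -, hl⟩⟩
    refine ⟨(hγ ▸ PFun.dom_comp_subset).antisymm (hl ▸ PFun.dom_comp_subset),
      fun x _ y _ => ⟨fun h => ?_, fun h => ?_⟩⟩
    · rw [← hl, PFun.comp_apply, PFun.comp_apply, h]
    · rw [← hγ, PFun.comp_apply, PFun.comp_apply, h]
  · rintro ⟨hdom, hker⟩
    refine ⟨exists_isOP_comp_eq_of_ker hg hf hdom.subset fun x hx y hy h => ?_,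
      exists_isOP_comp_eq_of_ker hf hg hdom.symm.subset fun x hx y hy h => (hker x hx y hy).1 h⟩
    rw [← hdom] at hx hy
    exact (hker x hx y hy).2 h

end OrientationPreserving

theorem stmt16 (X : Type*) [LinearOrder X] (α β : X →. X)
    (hα : IsOP α) (hβ : IsOP β) :
    (((∃ γ : X →. X, IsOP γ ∧ β.comp γ = α) ∧ (∃ l : X →. X, IsOP l ∧ α.comp l = β)) ↔
       α.ran = β.ran) ∧
    (((∃ γ : X →. X, IsOP γ ∧ γ.comp β = α) ∧ (∃ l : X →. X, IsOP l ∧ l.comp α = β)) ↔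
       (α.Dom = β.Dom ∧ ∀ x ∈ α.Dom, ∀ y ∈ α.Dom, (α x = α y ↔ β x = β y))) ∧
    ((((∃ γ : X →. X, IsOP γ ∧ β.comp γ = α) ∧ (∃ l : X →. X, IsOP l ∧ α.comp l = β)) ∧
      ((∃ γ : X →. X, IsOP γ ∧ γ.comp β = α) ∧ (∃ l : X →. X, IsOP l ∧ l.comp α = β))) ↔
       (α.ran = β.ran ∧ α.Dom = β.Dom ∧
         ∀ x ∈ α.Dom, ∀ y ∈ α.Dom, (α x = α y ↔ β x = β y))) :=
  ⟨greenL_iff_ran_eq hα hβ, greenR_iff_dom_eq_and_ker hα hβ,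
    and_congr (greenL_iff_ran_eq hα hβ) (greenR_iff_dom_eq_and_ker hα hβ)⟩
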